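/- For every y_0 ∈ Y, liminf_{α↑1} h_α(y_0) ≥ d*(y_0). -/

import Mathlib

open MeasureTheory Filter Topology Set

noncomputable section

variable {m : ℕ} {U₀ : Type*} [MetricSpace U₀] [CompactSpace U₀]
  [MeasurableSpace U₀] [BorelSpace U₀]

/-- The set `G = {(y,u) : y ∈ Y, u ∈ U y, f (y,u) ∈ Y}`. -/
def Gset (Y : Set (Fin m → ℝ)) (U : (Fin m → ℝ) → Set U₀)
    (f : (Fin m → ℝ) × U₀ → (Fin m → ℝ)) : Set ((Fin m → ℝ) × U₀) :=
  {p | p.1 ∈ Y ∧ p.2 ∈ U p.1 ∧ f p ∈ Y}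

/-- Admissible process from the initial condition `y₀`. -/
def Admissible (Y : Set (Fin m → ℝ)) (U : (Fin m → ℝ) → Set U₀)
    (f : (Fin m → ℝ) × U₀ → (Fin m → ℝ)) (y₀ : Fin m → ℝ)
    (y : ℕ → (Fin m → ℝ)) (u : ℕ → U₀) : Prop :=
  y 0 = y₀ ∧ ∀ t : ℕ, u t ∈ U (y t) ∧ y t ∈ Y ∧ y (t + 1) = f (y t, u t)

/-- Admissible process without a prescribed initial condition. -/
def AdmissibleProc (Y : Set (Fin m → ℝ)) (U : (Fin m → ℝ) → Set U₀)
    (f : (Fin m → ℝ) × U₀ → (Fin m → ℝ))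
    (y : ℕ → (Fin m → ℝ)) (u : ℕ → U₀) : Prop :=
  ∀ t : ℕ, u t ∈ U (y t) ∧ y t ∈ Y ∧ y (t + 1) = f (y t, u t)

/-- The finite-horizon value function `V_T(y₀)`. -/
def VT (Y : Set (Fin m → ℝ)) (U : (Fin m → ℝ) → Set U₀)
    (f : (Fin m → ℝ) × U₀ → (Fin m → ℝ)) (k : (Fin m → ℝ) × U₀ → ℝ)
    (T : ℕ) (y₀ : Fin m → ℝ) : ℝ :=
  sInf {c | ∃ y u, Admissible Y U f y₀ y u ∧
    c = (∑ t ∈ Finset.range T, k (y t, u t)) / (T : ℝ)}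

/-- The discounted value function `h_α(y₀)`. -/
def hdisc (Y : Set (Fin m → ℝ)) (U : (Fin m → ℝ) → Set U₀)
    (f : (Fin m → ℝ) × U₀ → (Fin m → ℝ)) (k : (Fin m → ℝ) × U₀ → ℝ)
    (α : ℝ) (y₀ : Fin m → ℝ) : ℝ :=
  (1 - α) * sInf {c | ∃ y u, Admissible Y U f y₀ y u ∧
    c = ∑' t : ℕ, α ^ t * k (y t, u t)}

/-- The set `W` of probability measures on `G` with zero drift. -/
def Wset (Y : Set (Fin m → ℝ)) (U : (Fin m → ℝ) → Set U₀)
    (f : (Fin m → ℝ) × U₀ → (Fin m → ℝ)) :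
    Set (Measure ((Fin m → ℝ) × U₀)) :=
  {γ | IsProbabilityMeasure γ ∧ γ (Gset Y U f)ᶜ = 0 ∧
    ∀ φ : (Fin m → ℝ) → ℝ, ContinuousOn φ Y →
      ∫ p, (φ (f p) - φ p.1) ∂γ = 0}

/-- The set `W₁(y₀)`. -/
def W1set (Y : Set (Fin m → ℝ)) (U : (Fin m → ℝ) → Set U₀)
    (f : (Fin m → ℝ) × U₀ → (Fin m → ℝ)) (y₀ : Fin m → ℝ) :
    Set (Measure ((Fin m → ℝ) × U₀)) :=
  {γ | γ ∈ Wset Y U f ∧ ∃ ξ : Measure ((Fin m → ℝ) × U₀),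
    IsFiniteMeasure ξ ∧ ξ (Gset Y U f)ᶜ = 0 ∧
    ∀ φ : (Fin m → ℝ) → ℝ, ContinuousOn φ Y →
      ∫ p, (φ p.1 - φ y₀) ∂γ = ∫ p, (φ (f p) - φ p.1) ∂ξ}

/-- The set `W₂(y₀)`. -/
def W2set (Y : Set (Fin m → ℝ)) (U : (Fin m → ℝ) → Set U₀)
    (f : (Fin m → ℝ) × U₀ → (Fin m → ℝ)) (y₀ : Fin m → ℝ) :
    Set (Measure ((Fin m → ℝ) × U₀)) :=
  {γ | γ ∈ Wset Y U f ∧ ∃ ξ : ℕ → Measure ((Fin m → ℝ) × U₀),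
    (∀ i, IsFiniteMeasure (ξ i) ∧ (ξ i) (Gset Y U f)ᶜ = 0) ∧
    ∀ φ : (Fin m → ℝ) → ℝ, ContinuousOn φ Y →
      Tendsto (fun i => ∫ p, (φ (f p) - φ p.1) ∂(ξ i)) atTop
        (𝓝 (∫ p, (φ p.1 - φ y₀) ∂γ))}

/-- The optimal value `d*(y₀)` of the dual IDLP problem. -/
def dstar (Y : Set (Fin m → ℝ)) (U : (Fin m → ℝ) → Set U₀)
    (f : (Fin m → ℝ) × U₀ → (Fin m → ℝ)) (k : (Fin m → ℝ) × U₀ → ℝ)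
    (y₀ : Fin m → ℝ) : ℝ :=
  sSup {μ : ℝ | ∃ ψ η : (Fin m → ℝ) → ℝ, ContinuousOn ψ Y ∧ ContinuousOn η Y ∧
    ∀ p ∈ Gset Y U f,
      0 ≤ k p + (ψ y₀ - ψ p.1) + η (f p) - η p.1 - μ ∧
      0 ≤ ψ (f p) - ψ p.1}

/-- The optimal value `k*(y₀)` of the primal IDLP problem. -/
def kstar (Y : Set (Fin m → ℝ)) (U : (Fin m → ℝ) → Set U₀)
    (f : (Fin m → ℝ) × U₀ → (Fin m → ℝ)) (k : (Fin m → ℝ) × U₀ → ℝ)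
    (y₀ : Fin m → ℝ) : ℝ :=
  sInf {c | ∃ γ ξ : Measure ((Fin m → ℝ) × U₀),
    γ ∈ Wset Y U f ∧ IsFiniteMeasure ξ ∧ ξ (Gset Y U f)ᶜ = 0 ∧
    (∀ φ : (Fin m → ℝ) → ℝ, ContinuousOn φ Y →
      ∫ p, (φ y₀ - φ p.1) ∂γ + ∫ p, (φ (f p) - φ p.1) ∂ξ = 0) ∧
    c = ∫ p, k p ∂γ}

/-- Occupational measure of a process over `{0, …, T-1}`. -/
def occMeas (y : ℕ → (Fin m → ℝ)) (u : ℕ → U₀) (T : ℕ) :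
    Measure ((Fin m → ℝ) × U₀) :=
  (T : ENNReal)⁻¹ • ∑ t ∈ Finset.range T, Measure.dirac (y t, u t)

/-- Discounted occupational measure of a process. -/
def discMeas (α : ℝ) (y : ℕ → (Fin m → ℝ)) (u : ℕ → U₀) :
    Measure ((Fin m → ℝ) × U₀) :=
  Measure.sum fun t : ℕ =>
    ENNReal.ofReal ((1 - α) * α ^ t) • Measure.dirac (y t, u t)

/-- The set `Γ_T(y₀)` of occupational measures. -/
def GammaT (Y : Set (Fin m → ℝ)) (U : (Fin m → ℝ) → Set U₀)
    (f : (Fin m → ℝ) × U₀ → (Fin m → ℝ)) (y₀ : Fin m → ℝ) (T : ℕ) :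
    Set (Measure ((Fin m → ℝ) × U₀)) :=
  {γ | ∃ y u, Admissible Y U f y₀ y u ∧ γ = occMeas y u T}

/-- The set `Θ_α(y₀)` of discounted occupational measures. -/
def Theta (Y : Set (Fin m → ℝ)) (U : (Fin m → ℝ) → Set U₀)
    (f : (Fin m → ℝ) × U₀ → (Fin m → ℝ)) (α : ℝ) (y₀ : Fin m → ℝ) :
    Set (Measure ((Fin m → ℝ) × U₀)) :=
  {γ | ∃ y u, Admissible Y U f y₀ y u ∧ γ = discMeas α y u}

/-- Weak* convergence of a sequence of measures (tested against functions
continuous on `G`). -/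
def WeakStarTendstoOn (G : Set ((Fin m → ℝ) × U₀))
    (γs : ℕ → Measure ((Fin m → ℝ) × U₀))
    (γ : Measure ((Fin m → ℝ) × U₀)) : Prop :=
  ∀ q : (Fin m → ℝ) × U₀ → ℝ, ContinuousOn q G →
    Tendsto (fun i => ∫ p, q p ∂(γs i)) atTop (𝓝 (∫ p, q p ∂γ))

/-- A `T`-periodic process. -/
def PeriodicProc (y : ℕ → (Fin m → ℝ)) (u : ℕ → U₀) (T : ℕ) : Prop :=
  ∀ t : ℕ, y (t + T) = y t ∧ u (t + T) = u t

/-- The point `z` is finite-time reachable from `y₀`. -/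
def FTReachable (Y : Set (Fin m → ℝ)) (U : (Fin m → ℝ) → Set U₀)
    (f : (Fin m → ℝ) × U₀ → (Fin m → ℝ)) (y₀ z : Fin m → ℝ) : Prop :=
  ∃ (tb : ℕ) (ty : ℕ → (Fin m → ℝ)) (tu : ℕ → U₀),
    Admissible Y U f y₀ ty tu ∧ ty tb = z

/-- The set `Γ_per(y₀)` of occupational measures of periodic processes
finite-time reachable from `y₀`. -/
def GammaPer (Y : Set (Fin m → ℝ)) (U : (Fin m → ℝ) → Set U₀)
    (f : (Fin m → ℝ) × U₀ → (Fin m → ℝ)) (y₀ : Fin m → ℝ) :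
    Set (Measure ((Fin m → ℝ) × U₀)) :=
  {γ | ∃ (T : ℕ) (y : ℕ → (Fin m → ℝ)) (u : ℕ → U₀), 1 ≤ T ∧
    AdmissibleProc Y U f y u ∧ PeriodicProc y u T ∧
    FTReachable Y U f y₀ (y 0) ∧ γ = occMeas y u T}

/-- The optimal value `V_per(y₀)` over periodic regimes. -/
def Vper (Y : Set (Fin m → ℝ)) (U : (Fin m → ℝ) → Set U₀)
    (f : (Fin m → ℝ) × U₀ → (Fin m → ℝ)) (k : (Fin m → ℝ) × U₀ → ℝ)
    (y₀ : Fin m → ℝ) : ℝ :=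
  sInf {c | ∃ (T : ℕ) (y : ℕ → (Fin m → ℝ)) (u : ℕ → U₀), 1 ≤ T ∧
    AdmissibleProc Y U f y u ∧ PeriodicProc y u T ∧
    FTReachable Y U f y₀ (y 0) ∧
    c = (∑ t ∈ Finset.range T, k (y t, u t)) / (T : ℝ)}

/-- The set `K` of continuous functions used in the alternative
representation of the limit optimal values. -/
def Kcal (Y : Set (Fin m → ℝ)) (U : (Fin m → ℝ) → Set U₀)
    (f : (Fin m → ℝ) × U₀ → (Fin m → ℝ)) (k : (Fin m → ℝ) × U₀ → ℝ) :
    Set ((Fin m → ℝ) → ℝ) :=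
  {w | ContinuousOn w Y ∧ (∀ p ∈ Gset Y U f, w p.1 ≤ w (f p)) ∧
    ∀ γ ∈ Wset Y U f, ∫ p, w p.1 ∂γ ≤ ∫ p, k p ∂γ}

/-- The optimal value `d*(θ, y₀)` of the perturbed dual problem. -/
def dstarTheta (Y : Set (Fin m → ℝ)) (U : (Fin m → ℝ) → Set U₀)
    (f : (Fin m → ℝ) × U₀ → (Fin m → ℝ)) (k : (Fin m → ℝ) × U₀ → ℝ)
    (θ : ℝ) (y₀ : Fin m → ℝ) : ℝ :=
  sSup {μ : ℝ | ∃ ψ η : (Fin m → ℝ) → ℝ, ContinuousOn ψ Y ∧ ContinuousOn η Y ∧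
    ∀ p ∈ Gset Y U f,
      0 ≤ k p + (ψ y₀ - ψ p.1) + η (f p) - η p.1 - μ ∧
      -θ ≤ ψ (f p) - ψ p.1}

/-- The optimal value `d̄*(θ, y₀)` of the perturbed dual problem in the
`ψ(y₀)` form. -/
def dbarTheta (Y : Set (Fin m → ℝ)) (U : (Fin m → ℝ) → Set U₀)
    (f : (Fin m → ℝ) × U₀ → (Fin m → ℝ)) (k : (Fin m → ℝ) × U₀ → ℝ)
    (θ : ℝ) (y₀ : Fin m → ℝ) : ℝ :=
  sSup {c : ℝ | ∃ ψ η : (Fin m → ℝ) → ℝ, ContinuousOn ψ Y ∧ ContinuousOn η Y ∧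
    (∀ p ∈ Gset Y U f,
      0 ≤ k p - ψ p.1 + η (f p) - η p.1 ∧
      -θ ≤ ψ (f p) - ψ p.1) ∧ c = ψ y₀}

/-- The optimal value `k*(θ, y₀)` of the perturbed primal problem. -/
def kstarTheta (Y : Set (Fin m → ℝ)) (U : (Fin m → ℝ) → Set U₀)
    (f : (Fin m → ℝ) × U₀ → (Fin m → ℝ)) (k : (Fin m → ℝ) × U₀ → ℝ)
    (θ : ℝ) (y₀ : Fin m → ℝ) : ℝ :=
  sInf {c | ∃ γ ξ : Measure ((Fin m → ℝ) × U₀),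
    γ ∈ Wset Y U f ∧ IsFiniteMeasure ξ ∧ ξ (Gset Y U f)ᶜ = 0 ∧
    (∀ φ : (Fin m → ℝ) → ℝ, ContinuousOn φ Y →
      ∫ p, (φ y₀ - φ p.1) ∂γ + ∫ p, (φ (f p) - φ p.1) ∂ξ = 0) ∧
    c = ∫ p, k p ∂γ + θ * (ξ Set.univ).toReal}

/-!
If `(μ, ψ, η)` is feasible for the dual problem, then along any admissible process `ψ` never
drops below `ψ(y₀)`, so `k(y t, u t) ≥ μ + η(y t) - η(y (t+1))`. Taking the Abel mean
`(1 - α) ∑ αᵗ (·)`, the telescoping term `η(y t) - η(y (t+1))` contributes at most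
`2 (1 - α) sup |η|`, hence `h_α(y₀) ≥ μ - 2 (1 - α) sup |η| → μ` as `α ↑ 1`.
-/

section DiscountedSums

variable {α M : ℝ} {b : ℕ → ℝ}

lemma norm_pow_mul_le_of_abs_le (hα0 : 0 ≤ α) (hb : ∀ t, |b t| ≤ M) (t : ℕ) :
    ‖α ^ t * b t‖ ≤ M * α ^ t := by
  rw [norm_mul, norm_pow, Real.norm_of_nonneg hα0, Real.norm_eq_abs, mul_comm]
  exact mul_le_mul_of_nonneg_right (hb t) (pow_nonneg hα0 t)

lemma summable_pow_mul_of_abs_le (hα0 : 0 ≤ α) (hα1 : α < 1) (hb : ∀ t, |b t| ≤ M) :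
    Summable fun t => α ^ t * b t :=
  .of_norm_bounded ((summable_geometric_of_lt_one hα0 hα1).mul_left M) (norm_pow_mul_le_of_abs_le hα0 hb)

lemma abs_one_sub_mul_tsum_pow_mul_le (hα0 : 0 ≤ α) (hα1 : α < 1) (hb : ∀ t, |b t| ≤ M) :
    |(1 - α) * ∑' t, α ^ t * b t| ≤ M := by
  have h1α : 0 < 1 - α := sub_pos.mpr hα1
  have hsum : ‖∑' t, α ^ t * b t‖ ≤ M * (1 - α)⁻¹ :=
    tsum_of_norm_bounded ((hasSum_geometric_of_lt_one hα0 hα1).mul_left M)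
      (norm_pow_mul_le_of_abs_le hα0 hb)
  rw [abs_mul, abs_of_pos h1α, ← le_div_iff₀' h1α, div_eq_mul_inv]
  exact hsum

lemma abs_tsum_pow_mul_sub_succ_le (hα0 : 0 ≤ α) (hα1 : α < 1) (hb : ∀ t, |b t| ≤ M) :
    |∑' t, α ^ t * (b t - b (t + 1))| ≤ 2 * M := by
  have hsum := summable_pow_mul_of_abs_le hα0 hα1 hb
  have hsum' := summable_pow_mul_of_abs_le hα0 hα1 fun t => hb (t + 1)
  have hshift : ∑' t, α ^ t * b t = b 0 + α * ∑' t, α ^ t * b (t + 1) := by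
    rw [hsum.tsum_eq_zero_add, ← tsum_mul_left]
    simp only [pow_zero, one_mul, pow_succ]
    congr 1
    exact tsum_congr fun t => by ring
  have hdiff : ∑' t, α ^ t * (b t - b (t + 1)) =
      b 0 - (1 - α) * ∑' t, α ^ t * b (t + 1) := by
    simp only [mul_sub]
    rw [hsum.tsum_sub hsum', hshift]
    ring
  rw [hdiff]
  calc |b 0 - (1 - α) * ∑' t, α ^ t * b (t + 1)|
      ≤ |b 0| + |(1 - α) * ∑' t, α ^ t * b (t + 1)| := abs_sub _ _
    _ ≤ M + M := add_le_add (hb 0) (abs_one_sub_mul_tsum_pow_mul_le hα0 hα1 fun t => hb (t + 1))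
    _ = 2 * M := by ring

lemma sub_le_one_sub_mul_tsum_of_le_add_sub_succ {c : ℕ → ℝ} {μ : ℝ} (hα0 : 0 ≤ α)
    (hα1 : α < 1) (hb : ∀ t, |b t| ≤ M) (hc : Summable fun t => α ^ t * c t)
    (hle : ∀ t, μ + (b t - b (t + 1)) ≤ c t) :
    μ - 2 * M * (1 - α) ≤ (1 - α) * ∑' t, α ^ t * c t := by
  have hgeo := summable_geometric_of_lt_one hα0 hα1
  have hsum := summable_pow_mul_of_abs_le hα0 hα1 hb
  have hsum' := summable_pow_mul_of_abs_le hα0 hα1 fun t => hb (t + 1)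
  have htel : Summable fun t => α ^ t * (b t - b (t + 1)) := by
    simpa only [mul_sub] using hsum.sub hsum'
  have hlow : μ * (1 - α)⁻¹ + ∑' t, α ^ t * (b t - b (t + 1)) ≤ ∑' t, α ^ t * c t := by
    rw [← tsum_geometric_of_lt_one hα0 hα1, ← tsum_mul_left, ← (hgeo.mul_left μ).tsum_add htel]
    refine (hgeo.mul_left μ |>.add htel).tsum_le_tsum (fun t => ?_) hc
    calc μ * α ^ t + α ^ t * (b t - b (t + 1)) = α ^ t * (μ + (b t - b (t + 1))) := by ring
      _ ≤ α ^ t * c t := mul_le_mul_of_nonneg_left (hle t) (pow_nonneg hα0 t)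
  have htel_bound := (abs_le.mp (abs_tsum_pow_mul_sub_succ_le hα0 hα1 hb)).1
  have h1α : 0 < 1 - α := sub_pos.mpr hα1
  calc μ - 2 * M * (1 - α) ≤ (1 - α) * (μ * (1 - α)⁻¹ + ∑' t, α ^ t * (b t - b (t + 1))) := by
        rw [mul_add, mul_comm μ, mul_inv_cancel_left₀ h1α.ne']
        linarith [mul_le_mul_of_nonneg_left htel_bound h1α.le]
    _ ≤ (1 - α) * ∑' t, α ^ t * c t := mul_le_mul_of_nonneg_left hlow h1α.le

end DiscountedSums

lemma le_liminf_of_tendsto_of_eventually_le {β : Type*} {l : Filter β} [l.NeBot]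
    {g L : β → ℝ} {μ : ℝ} (hL : Tendsto L l (𝓝 μ)) (hLg : ∀ᶠ x in l, L x ≤ g x)
    (hg : IsBoundedUnder (· ≤ ·) l g) : μ ≤ liminf g l :=
  hL.liminf_eq ▸ liminf_le_liminf hLg hL.isBoundedUnder_ge hg.isCoboundedUnder_ge

section Processes

variable {n : ℕ} {V : Type*} {Y : Set (Fin n → ℝ)} {U : (Fin n → ℝ) → Set V}
  {f : (Fin n → ℝ) × V → (Fin n → ℝ)} {k : (Fin n → ℝ) × V → ℝ} {y₀ : Fin n → ℝ}
  {y : ℕ → Fin n → ℝ} {u : ℕ → V}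

lemma exists_admissible (hA : ∀ y ∈ Y, ∃ u ∈ U y, f (y, u) ∈ Y) (hy₀ : y₀ ∈ Y) :
    ∃ y u, Admissible Y U f y₀ y u := by
  have : Nonempty V := ⟨(hA y₀ hy₀).choose⟩
  choose! g hgU hgY using hA
  set F : (Fin n → ℝ) → (Fin n → ℝ) := fun z => f (z, g z)
  have hmem : ∀ t, F^[t] y₀ ∈ Y := fun t => by
    induction t with
    | zero => exact hy₀
    | succ t ih => rw [Function.iterate_succ_apply']; exact hgY _ ih
  exact ⟨fun t => F^[t] y₀, fun t => g (F^[t] y₀), rfl,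
    fun t => ⟨hgU _ (hmem t), hmem t, Function.iterate_succ_apply' F t y₀⟩⟩

lemma Admissible.mem_Gset (h : Admissible Y U f y₀ y u) (t : ℕ) : (y t, u t) ∈ Gset Y U f :=
  ⟨(h.2 t).2.1, (h.2 t).1, (h.2 t).2.2 ▸ (h.2 (t + 1)).2.1⟩

lemma Admissible.le_apply_of_forall_le {ψ : (Fin n → ℝ) → ℝ} (h : Admissible Y U f y₀ y u)
    (hψ : ∀ p ∈ Gset Y U f, ψ p.1 ≤ ψ (f p)) (t : ℕ) : ψ y₀ ≤ ψ (y t) := by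
  induction t with
  | zero => rw [h.1]
  | succ t ih => exact (h.2 t).2.2 ▸ ih.trans (hψ _ (h.mem_Gset t))

lemma Admissible.add_sub_succ_le_of_dual_feasible {ψ η : (Fin n → ℝ) → ℝ} {μ : ℝ}
    (h : Admissible Y U f y₀ y u)
    (hfeas : ∀ p ∈ Gset Y U f,
      0 ≤ k p + (ψ y₀ - ψ p.1) + η (f p) - η p.1 - μ ∧ 0 ≤ ψ (f p) - ψ p.1) (t : ℕ) :
    μ + (η (y t) - η (y (t + 1))) ≤ k (y t, u t) := by
  have hψ := h.le_apply_of_forall_le (fun p hp => sub_nonneg.mp (hfeas p hp).2) t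
  have hk := (hfeas _ (h.mem_Gset t)).1
  rw [← (h.2 t).2.2] at hk
  linarith

lemma Admissible.abs_one_sub_mul_tsum_le {α C : ℝ} (h : Admissible Y U f y₀ y u)
    (hα0 : 0 ≤ α) (hα1 : α < 1) (hC : ∀ p ∈ Gset Y U f, |k p| ≤ C) :
    |(1 - α) * ∑' t, α ^ t * k (y t, u t)| ≤ C :=
  abs_one_sub_mul_tsum_pow_mul_le hα0 hα1 fun t => hC _ (h.mem_Gset t)

variable {α L : ℝ}

lemma le_hdisc (hα1 : α < 1) (hne : ∃ y u, Admissible Y U f y₀ y u)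
    (hL : ∀ y u, Admissible Y U f y₀ y u → L ≤ (1 - α) * ∑' t, α ^ t * k (y t, u t)) :
    L ≤ hdisc Y U f k α y₀ := by
  have h1α : 0 < 1 - α := sub_pos.mpr hα1
  obtain ⟨y, u, hadm⟩ := hne
  rw [hdisc, ← div_le_iff₀' h1α]
  refine le_csInf ⟨_, y, u, hadm, rfl⟩ ?_
  rintro c ⟨y, u, hadm, rfl⟩
  rw [div_le_iff₀' h1α]
  exact hL y u hadm

lemma hdisc_le (hα1 : α < 1) (hadm : Admissible Y U f y₀ y u)
    (hL : ∀ y u, Admissible Y U f y₀ y u → L ≤ (1 - α) * ∑' t, α ^ t * k (y t, u t)) :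
    hdisc Y U f k α y₀ ≤ (1 - α) * ∑' t, α ^ t * k (y t, u t) := by
  have h1α : 0 < 1 - α := sub_pos.mpr hα1
  have hbdd : BddBelow {c | ∃ y u, Admissible Y U f y₀ y u ∧
      c = ∑' t, α ^ t * k (y t, u t)} := by
    refine ⟨L / (1 - α), ?_⟩
    rintro c ⟨y, u, hadm, rfl⟩
    rw [div_le_iff₀' h1α]
    exact hL y u hadm
  exact mul_le_mul_of_nonneg_left (csInf_le hbdd ⟨y, u, hadm, rfl⟩) h1α.le

lemma hdisc_le_of_abs_le {C : ℝ} (hα0 : 0 ≤ α) (hα1 : α < 1) (hadm : Admissible Y U f y₀ y u)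
    (hC : ∀ p ∈ Gset Y U f, |k p| ≤ C) : hdisc Y U f k α y₀ ≤ C :=
  (hdisc_le hα1 hadm fun _ _ h => (abs_le.mp (h.abs_one_sub_mul_tsum_le hα0 hα1 hC)).1).trans
    (abs_le.mp (hadm.abs_one_sub_mul_tsum_le hα0 hα1 hC)).2

lemma sub_le_hdisc_of_dual_feasible {ψ η : (Fin n → ℝ) → ℝ} {μ M C : ℝ} (hα0 : 0 ≤ α)
    (hα1 : α < 1) (hne : ∃ y u, Admissible Y U f y₀ y u)
    (hC : ∀ p ∈ Gset Y U f, |k p| ≤ C) (hM : ∀ z ∈ Y, |η z| ≤ M)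
    (hfeas : ∀ p ∈ Gset Y U f,
      0 ≤ k p + (ψ y₀ - ψ p.1) + η (f p) - η p.1 - μ ∧ 0 ≤ ψ (f p) - ψ p.1) :
    μ - 2 * M * (1 - α) ≤ hdisc Y U f k α y₀ :=
  le_hdisc hα1 hne fun _ _ h =>
    sub_le_one_sub_mul_tsum_of_le_add_sub_succ hα0 hα1 (fun t => hM _ (h.2 t).2.1)
      (summable_pow_mul_of_abs_le hα0 hα1 fun t => hC _ (h.mem_Gset t))
      (h.add_sub_succ_le_of_dual_feasible hfeas)

end Processes

theorem stmt_4_general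
    (Y : Set (Fin m → ℝ)) (hYcomp : IsCompact Y)
    (U : (Fin m → ℝ) → Set U₀)
    (f : (Fin m → ℝ) × U₀ → (Fin m → ℝ))
    (k : (Fin m → ℝ) × U₀ → ℝ) (hk : Continuous k)
    (hA : ∀ y ∈ Y, ∃ u ∈ U y, f (y, u) ∈ Y) :
    ∀ y₀ ∈ Y, dstar Y U f k y₀ ≤
      liminf (fun α : ℝ => hdisc Y U f k α y₀) (𝓝[Set.Ioo (0 : ℝ) 1] 1) := by
  intro y₀ hy₀
  have := right_nhdsWithin_Ioo_neBot (zero_lt_one' ℝ)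
  obtain ⟨C, hC⟩ : ∃ C, ∀ p ∈ Gset Y U f, |k p| ≤ C := by
    obtain ⟨C, hC⟩ := (hYcomp.prod isCompact_univ).exists_bound_of_continuousOn hk.continuousOn
    exact ⟨C, fun p hp => hC p ⟨hp.1, trivial⟩⟩
  obtain ⟨y, u, hadm⟩ := exists_admissible hA hy₀
  have hbdd : IsBoundedUnder (· ≤ ·) (𝓝[Ioo (0 : ℝ) 1] 1) fun α => hdisc Y U f k α y₀ :=
    ⟨C, eventually_map.mpr <| eventually_mem_nhdsWithin.mono fun α hα =>
      hdisc_le_of_abs_le hα.1.le hα.2 hadm hC⟩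
  refine csSup_le ⟨-C, 0, 0, continuousOn_const, continuousOn_const, fun p hp => ?_⟩ ?_
  · simp only [Pi.zero_apply, sub_self, add_zero, sub_neg_eq_add, le_refl, and_true]
    linarith [(abs_le.mp (hC p hp)).1]
  rintro μ ⟨ψ, η, -, hη, hfeas⟩
  obtain ⟨M, hM⟩ := hYcomp.exists_bound_of_continuousOn hη
  have hL : Tendsto (fun α : ℝ => μ - 2 * M * (1 - α)) (𝓝[Ioo (0 : ℝ) 1] 1) (𝓝 μ) := by
    have hcont : Continuous fun α : ℝ => μ - 2 * M * (1 - α) := by fun_prop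
    exact tendsto_nhdsWithin_of_tendsto_nhds (by simpa using hcont.tendsto 1)
  exact le_liminf_of_tendsto_of_eventually_le hL
    (eventually_mem_nhdsWithin.mono fun α hα =>
      sub_le_hdisc_of_dual_feasible hα.1.le hα.2 ⟨y, u, hadm⟩ hC hM hfeas) hbdd

theorem stmt_4
    (Y : Set (Fin m → ℝ)) (hYne : Y.Nonempty) (hYcomp : IsCompact Y)
    (U : (Fin m → ℝ) → Set U₀)
    (hUne : ∀ y ∈ Y, (U y).Nonempty) (hUcomp : ∀ y ∈ Y, IsCompact (U y))
    (hUgraph : IsClosed {p : (Fin m → ℝ) × U₀ | p.1 ∈ Y ∧ p.2 ∈ U p.1})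
    (f : (Fin m → ℝ) × U₀ → (Fin m → ℝ)) (hf : Continuous f)
    (k : (Fin m → ℝ) × U₀ → ℝ) (hk : Continuous k)
    (hA : ∀ y ∈ Y, ∃ u ∈ U y, f (y, u) ∈ Y) :
    ∀ y₀ ∈ Y, dstar Y U f k y₀ ≤
      liminf (fun α : ℝ => hdisc Y U f k α y₀) (𝓝[Set.Ioo (0 : ℝ) 1] 1) :=
  stmt_4_general Y hYcomp U f k hk hA
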